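/- Let m, n ≥ 1 be integers and let K_m and K_n be complete graphs on m and n vertices respectively. Then the sparing number of the corona K_m ⊙ K_n equals (1/2)[(m−1)(m−2) + mn(n−1)]. -/

import Mathlib

open Pointwise

/-- The induced set-label on (potential) edges: `f u + f v` (sumset). -/
def edgeLabel {V : Type*} (f : V → Finset ℕ) : Sym2 V → Finset ℕ :=
  Sym2.lift ⟨fun u v => f u + f v, fun u v => add_comm (f u) (f v)⟩

/-- `f` is a weak integer additive set-indexer (weak IASI) of `G`. -/
structure IsWeakIASI {V : Type*} (G : SimpleGraph V) (f : V → Finset ℕ) : Prop where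
  inj : Function.Injective f
  nonempty : ∀ v, (f v).Nonempty
  edgeInj : Set.InjOn (edgeLabel f) G.edgeSet
  weak : ∀ ⦃u v⦄, G.Adj u v → (f u + f v).card = max (f u).card (f v).card

/-- The number of mono-indexed edges of `G` under the labeling `f`. -/
noncomputable def monoCount {V : Type*} (G : SimpleGraph V) (f : V → Finset ℕ) : ℕ :=
  {e | e ∈ G.edgeSet ∧ (edgeLabel f e).card = 1}.ncard

/-- The sparing number of `G`: the minimum number of mono-indexed edges over all weak IASIs. -/
noncomputable def sparingNumber {V : Type*} (G : SimpleGraph V) : ℕ :=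
  sInf {k | ∃ f, IsWeakIASI G f ∧ monoCount G f = k}

/-- The corona `G₁ ⊙ G₂`: one copy of `G₁`, a copy of `G₂` for each vertex `i` of `G₁`,
with `i` joined to every vertex of the `i`-th copy of `G₂`. -/
def corona {V₁ V₂ : Type*} (G₁ : SimpleGraph V₁) (G₂ : SimpleGraph V₂) :
    SimpleGraph (V₁ ⊕ V₁ × V₂) where
  Adj x y :=
    match x, y with
    | Sum.inl u, Sum.inl v => G₁.Adj u v
    | Sum.inl u, Sum.inr q => u = q.1
    | Sum.inr p, Sum.inl v => v = p.1
    | Sum.inr p, Sum.inr q => p.1 = q.1 ∧ G₂.Adj p.2 q.2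
  symm := by
    constructor
    rintro (u | ⟨i, a⟩) (v | ⟨j, b⟩) h
    · exact h.symm
    · exact h
    · exact h
    · exact ⟨h.1.symm, h.2.symm⟩
  loopless := by
    constructor
    rintro (u | ⟨i, a⟩) h
    · exact G₁.irrefl h
    · exact G₂.irrefl h.2


/-!
By Cauchy–Davenport, `|A + B| ≥ |A| + |B| - 1`, so a weak IASI gives every edge a mono-indexed
end: the vertices that are not mono-indexed form an independent set `S`, and the mono-indexed
edges are exactly the edges avoiding `S`, of which there are `|E| - ∑_{v ∈ S} deg v`. Conversely
every independent set arises in this way, so `φ(G) = |E| - max_S ∑_{v ∈ S} deg v`.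

In `K_m ⊙ K_n` a vertex has degree `n`, plus `m - 1` if it lies in `K_m`. An independent set meets
`K_m` at most once, and each of the `m` cliques formed by a vertex `i` of `K_m` with the `i`-th copy
of `K_n` at most once, so the maximum is `mn + m - 1`, attained by one vertex of `K_m` and one
vertex in each of the other copies of `K_n`.
-/

open Finset SimpleGraph

section Sumset

variable {α : Type*}

lemma card_add_eq_one_iff [DecidableEq α] [Add α] [IsCancelAdd α] {A B : Finset α}
    (hA : A.Nonempty) (hB : B.Nonempty) : #(A + B) = 1 ↔ #A = 1 ∧ #B = 1 := by
  refine ⟨fun h => ?_, fun ⟨hA1, hB1⟩ => ?_⟩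
  · have := card_le_card_add_right (s := A) hB
    have := card_le_card_add_left (t := B) hA
    have := hA.card_pos
    have := hB.card_pos
    omega
  · obtain ⟨a, rfl⟩ := card_eq_one.1 hA1
    obtain ⟨b, rfl⟩ := card_eq_one.1 hB1
    simp

lemma card_eq_one_or_card_eq_one_of_card_add_eq_max [LinearOrder α] [Add α] [IsCancelAdd α]
    [AddLeftMono α] [AddRightMono α] {A B : Finset α} (hA : A.Nonempty) (hB : B.Nonempty)
    (h : #(A + B) = max #A #B) : #A = 1 ∨ #B = 1 := by
  have := cauchy_davenport_add_of_linearOrder_isCancelAdd hA hB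
  have := hA.card_pos
  have := hB.card_pos
  omega

lemma IsLeast.add [Add α] [Preorder α] [AddLeftMono α] [AddRightMono α] {s t : Set α} {a b : α}
    (ha : IsLeast s a) (hb : IsLeast t b) : IsLeast (s + t) (a + b) :=
  ⟨Set.add_mem_add ha.1 hb.1, add_mem_lowerBounds_add ha.2 hb.2⟩

end Sumset

lemma sym2_eq_of_two_pow_add_two_pow_eq {a b c d : ℕ} (hab : a ≠ b) (hcd : c ≠ d)
    (h : 2 ^ a + 2 ^ b = 2 ^ c + 2 ^ d) : s(a, b) = s(c, d) := by
  have hpair : ({a, b} : Finset ℕ) = {c, d} := Finset.equivBitIndices.symm.injective <| by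
    simpa [Finset.equivBitIndices, sum_pair hab, sum_pair hcd] using h
  exact Sym2.ext fun x => by simpa using congr(x ∈ $hpair)

@[simp] lemma edgeLabel_mk {V : Type*} (f : V → Finset ℕ) (u v : V) :
    edgeLabel f s(u, v) = f u + f v := rfl

section WeakIASI

variable {V : Type*} {G : SimpleGraph V}

lemma IsWeakIASI.card_eq_one_or_card_eq_one {f : V → Finset ℕ} (hf : IsWeakIASI G f) {u v : V}
    (h : G.Adj u v) : #(f u) = 1 ∨ #(f v) = 1 :=
  card_eq_one_or_card_eq_one_of_card_add_eq_max (hf.nonempty u) (hf.nonempty v) (hf.weak h)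

variable [Fintype V]

def multiIndexed (f : V → Finset ℕ) : Finset V := {v | #(f v) ≠ 1}

lemma IsWeakIASI.isIndepSet_multiIndexed {f : V → Finset ℕ} (hf : IsWeakIASI G f) :
    G.IsIndepSet ↑(multiIndexed f) := fun u hu v hv _ huv => by
  simp only [multiIndexed, coe_filter, mem_univ, true_and, Set.mem_ofPred_eq] at hu hv
  exact (hf.card_eq_one_or_card_eq_one huv).elim hu hv

variable [DecidableEq V]

/-- The labels are `[w v, w v + 1]` on `S` and `{w v}` off `S`, with `w v` distinct powers of two:
the least element `w u + w v` of an edge label determines the edge by uniqueness of binary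
expansions. -/
lemma exists_isWeakIASI_multiIndexed_eq {S : Finset V} (hS : G.IsIndepSet ↑S) :
    ∃ f, IsWeakIASI G f ∧ multiIndexed f = S := by
  set ι : V → ℕ := fun v => Fintype.equivFin V v
  have hι : Function.Injective ι := Fin.val_injective.comp (Fintype.equivFin V).injective
  set w : V → ℕ := fun v => 2 ^ ι v
  set f : V → Finset ℕ := fun v => Icc (w v) (w v + if v ∈ S then 1 else 0)
  have hleast : ∀ v, IsLeast ↑(f v) (w v) := fun v => by
    simpa [f] using isLeast_Icc (Nat.le_add_right _ _)
  have hleast_add : ∀ u v, IsLeast ↑(f u + f v) (w u + w v) := fun u v => by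
    simpa [coe_add] using (hleast u).add (hleast v)
  have hcard : ∀ v, #(f v) = if v ∈ S then 2 else 1 := fun v => by
    by_cases hv : v ∈ S <;> simp [f, hv, add_assoc]
  have hsingleton : ∀ v, v ∉ S → f v = {w v} := fun v hv => by simp [f, hv]
  refine ⟨f, ⟨fun u v h => hι (Nat.pow_right_injective le_rfl ((hleast u).unique (h ▸ hleast v))),
    fun v => ⟨w v, (hleast v).1⟩, ?_, ?_⟩, ?_⟩
  · rintro ⟨u, v⟩ huv ⟨u', v'⟩ huv' h
    have hleast_uv := hleast_add u v
    rw [show f u + f v = f u' + f v' from h] at hleast_uv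
    have hsum : 2 ^ ι u + 2 ^ ι v = 2 ^ ι u' + 2 ^ ι v' := hleast_uv.unique (hleast_add u' v')
    have := sym2_eq_of_two_pow_add_two_pow_eq (hι.ne (G.ne_of_adj huv))
      (hι.ne (G.ne_of_adj huv')) hsum
    exact Sym2.map.injective hι (by simpa only [Sym2.map_mk] using this)
  · intro u v huv
    by_cases hu : u ∈ S
    · have hv : v ∉ S := fun hv => hS hu hv (G.ne_of_adj huv) huv
      simp [hsingleton v hv, hcard, hu]
    · simp only [hsingleton u hu, card_singleton_add, card_singleton, hcard]
      split_ifs <;> simp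
  · ext v
    by_cases hv : v ∈ S <;> simp [multiIndexed, hcard, hv]

variable [DecidableRel G.Adj]

lemma IsWeakIASI.monoCount_add_sum_degree {f : V → Finset ℕ} (hf : IsWeakIASI G f) :
    monoCount G f + ∑ v ∈ multiIndexed f, G.degree v = #G.edgeFinset := by
  set S := multiIndexed f
  have hmono : {e | e ∈ G.edgeSet ∧ #(edgeLabel f e) = 1}
      = ↑(G.edgeFinset \ S.biUnion (G.incidenceFinset ·)) := by
    ext e
    induction e using Sym2.ind with
    | _ u v =>
      simp only [S, multiIndexed, Set.mem_ofPred_eq, mem_edgeSet, edgeLabel_mk, coe_sdiff,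
        coe_biUnion, coe_filter, mem_univ, true_and, coe_incidenceFinset, Set.mem_sdiff,
        mem_coe, mem_edgeFinset, Set.mem_iUnion, mk'_mem_incidenceSet_iff, exists_prop,
        not_exists, not_and, card_add_eq_one_iff (hf.nonempty u) (hf.nonempty v)]
      grind
  have hdisj : (S : Set V).PairwiseDisjoint (G.incidenceFinset ·) := fun u hu v hv huv => by
    rw [Function.onFun, ← disjoint_coe, coe_incidenceFinset, coe_incidenceFinset,
      Set.disjoint_iff_inter_eq_empty]
    exact G.incidenceSet_inter_incidenceSet_of_not_adj (hf.isIndepSet_multiIndexed hu hv huv) huv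
  have hsub : S.biUnion (G.incidenceFinset ·) ⊆ G.edgeFinset :=
    biUnion_subset.2 fun v _ => G.incidenceFinset_subset v
  have hcard : #(S.biUnion (G.incidenceFinset ·)) = ∑ v ∈ S, G.degree v := by
    simp only [card_biUnion hdisj, card_incidenceFinset_eq_degree]
  rw [monoCount, hmono, Set.ncard_coe_finset, card_sdiff_of_subset hsub, ← hcard,
    Nat.sub_add_cancel (card_le_card hsub)]

theorem sparingNumber_add_sum_degree_eq {S₀ : Finset V} (hS₀ : G.IsIndepSet ↑S₀)
    (hmax : ∀ S : Finset V, G.IsIndepSet ↑S → ∑ v ∈ S, G.degree v ≤ ∑ v ∈ S₀, G.degree v) :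
    sparingNumber G + ∑ v ∈ S₀, G.degree v = #G.edgeFinset := by
  obtain ⟨f₀, hf₀, hS⟩ := exists_isWeakIASI_multiIndexed_eq hS₀
  have hleast : IsLeast {k | ∃ f, IsWeakIASI G f ∧ monoCount G f = k} (monoCount G f₀) := by
    refine ⟨⟨f₀, hf₀, rfl⟩, ?_⟩
    rintro _ ⟨f, hf, rfl⟩
    have := hf.monoCount_add_sum_degree
    have := hmax _ hf.isIndepSet_multiIndexed
    have := hf₀.monoCount_add_sum_degree
    rw [hS] at this
    omega
  rw [sparingNumber, hleast.csInf_eq, ← hS, hf₀.monoCount_add_sum_degree]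

end WeakIASI

section Corona

variable {V₁ V₂ : Type*}

@[simp] lemma corona_adj_inl_inl (G₁ : SimpleGraph V₁) (G₂ : SimpleGraph V₂) (u v : V₁) :
    (corona G₁ G₂).Adj (.inl u) (.inl v) ↔ G₁.Adj u v := Iff.rfl

@[simp] lemma corona_adj_inl_inr (G₁ : SimpleGraph V₁) (G₂ : SimpleGraph V₂) (u : V₁)
    (q : V₁ × V₂) : (corona G₁ G₂).Adj (.inl u) (.inr q) ↔ u = q.1 := Iff.rfl

@[simp] lemma corona_adj_inr_inl (G₁ : SimpleGraph V₁) (G₂ : SimpleGraph V₂) (p : V₁ × V₂)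
    (v : V₁) : (corona G₁ G₂).Adj (.inr p) (.inl v) ↔ v = p.1 := Iff.rfl

@[simp] lemma corona_adj_inr_inr (G₁ : SimpleGraph V₁) (G₂ : SimpleGraph V₂) (p q : V₁ × V₂) :
    (corona G₁ G₂).Adj (.inr p) (.inr q) ↔ p.1 = q.1 ∧ G₂.Adj p.2 q.2 := Iff.rfl

instance (G₁ : SimpleGraph V₁) (G₂ : SimpleGraph V₂) [DecidableEq V₁] [DecidableRel G₁.Adj]
    [DecidableRel G₂.Adj] : DecidableRel (corona G₁ G₂).Adj
  | .inl u, .inl v => decidable_of_iff _ (corona_adj_inl_inl G₁ G₂ u v).symm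
  | .inl u, .inr q => decidable_of_iff _ (corona_adj_inl_inr G₁ G₂ u q).symm
  | .inr p, .inl v => decidable_of_iff _ (corona_adj_inr_inl G₁ G₂ p v).symm
  | .inr p, .inr q => decidable_of_iff _ (corona_adj_inr_inr G₁ G₂ p q).symm

def coronaBlock : V₁ ⊕ V₁ × V₂ → V₁ := Sum.elim id Prod.fst

lemma corona_top_adj_of_coronaBlock_eq (G₁ : SimpleGraph V₁) {x y : V₁ ⊕ V₁ × V₂} (hxy : x ≠ y)
    (h : coronaBlock x = coronaBlock y) : (corona G₁ ⊤).Adj x y := by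
  rcases x with u | ⟨u, a⟩ <;> rcases y with v | ⟨v, b⟩ <;> simp_all [coronaBlock, Prod.ext_iff]

lemma card_le_of_isIndepSet_corona_top [Fintype V₁] {G₁ : SimpleGraph V₁}
    {S : Finset (V₁ ⊕ V₁ × V₂)} (hS : (corona G₁ ⊤).IsIndepSet (S : Set (V₁ ⊕ V₁ × V₂))) :
    #S ≤ Fintype.card V₁ :=
  card_le_card_of_injOn coronaBlock (fun _ _ => mem_univ _) fun _ hx _ hy hxy =>
    by_contra fun hne => hS hx hy hne (corona_top_adj_of_coronaBlock_eq G₁ hne hxy)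

lemma card_filter_isLeft_le_one_of_isIndepSet_corona_top {G₂ : SimpleGraph V₂}
    {S : Finset (V₁ ⊕ V₁ × V₂)} (hS : (corona ⊤ G₂).IsIndepSet (S : Set (V₁ ⊕ V₁ × V₂))) :
    #{x ∈ S | x.isLeft} ≤ 1 := by
  refine card_le_one.2 fun x hx y hy => by_contra fun hne => ?_
  rcases x with u | _
  · rcases y with v | _
    · exact hS (mem_filter.1 hx).1 (mem_filter.1 hy).1 hne (by simpa using hne)
    · simp at hy
  · simp at hx

def coronaTransversal [Fintype V₁] [DecidableEq V₁] [DecidableEq V₂] (u₀ : V₁) (a₀ : V₂) :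
    Finset (V₁ ⊕ V₁ × V₂) :=
  univ.image fun u => if u = u₀ then .inl u else .inr (u, a₀)

lemma isIndepSet_coronaTransversal [Fintype V₁] [DecidableEq V₁] [DecidableEq V₂]
    (G₁ : SimpleGraph V₁) (G₂ : SimpleGraph V₂) (u₀ : V₁) (a₀ : V₂) :
    (corona G₁ G₂).IsIndepSet ↑(coronaTransversal u₀ a₀) := by
  simp only [coronaTransversal, coe_image, coe_univ, Set.image_univ]
  rintro _ ⟨u, rfl⟩ _ ⟨v, rfl⟩ hne
  have huv : u ≠ v := fun h => hne (h ▸ rfl)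
  by_cases hu : u = u₀ <;> by_cases hv : v = u₀ <;> simp_all [eq_comm]

variable [Fintype V₁] [Fintype V₂] [DecidableEq V₁]

lemma corona_degree_inl (G₁ : SimpleGraph V₁) (G₂ : SimpleGraph V₂) [DecidableRel G₁.Adj]
    [DecidableRel G₂.Adj] (u : V₁) :
    (corona G₁ G₂).degree (.inl u) = G₁.degree u + Fintype.card V₂ := by
  rw [← card_neighborFinset_eq_degree, neighborFinset_eq_filter, card_filter,
    Fintype.sum_sum_type, Fintype.sum_prod_type]
  simp [← card_neighborFinset_eq_degree, neighborFinset_eq_filter]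

lemma corona_degree_inr (G₁ : SimpleGraph V₁) (G₂ : SimpleGraph V₂) [DecidableRel G₁.Adj]
    [DecidableRel G₂.Adj] (p : V₁ × V₂) :
    (corona G₁ G₂).degree (.inr p) = G₂.degree p.2 + 1 := by
  rw [← card_neighborFinset_eq_degree, neighborFinset_eq_filter, card_filter,
    Fintype.sum_sum_type, Fintype.sum_prod_type]
  simp only [corona_adj_inr_inl, corona_adj_inr_inr, ← card_filter]
  rw [Fintype.sum_eq_single p.1 fun i hi => by simp [Ne.symm hi]]
  simp [← card_neighborFinset_eq_degree, neighborFinset_eq_filter, filter_eq', add_comm]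

variable [DecidableEq V₂]

lemma corona_top_degree (x : V₁ ⊕ V₁ × V₂) :
    (corona (⊤ : SimpleGraph V₁) (⊤ : SimpleGraph V₂)).degree x
      = Fintype.card V₂ + if x.isLeft then Fintype.card V₁ - 1 else 0 := by
  rcases x with u | p
  · simp [corona_degree_inl, add_comm]
  · have : 0 < Fintype.card V₂ := Fintype.card_pos_iff.2 ⟨p.2⟩
    simp only [corona_degree_inr, complete_graph_degree, Sum.isLeft_inr, Bool.false_eq_true,
      ↓reduceIte, add_zero]
    omega

lemma sum_corona_top_degree (S : Finset (V₁ ⊕ V₁ × V₂)) :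
    ∑ x ∈ S, (corona (⊤ : SimpleGraph V₁) (⊤ : SimpleGraph V₂)).degree x
      = Fintype.card V₂ * #S + (Fintype.card V₁ - 1) * #{x ∈ S | x.isLeft} := by
  simp only [corona_top_degree, sum_add_distrib, sum_const, smul_eq_mul, ← sum_filter,
    mul_comm]

lemma sum_corona_top_degree_le_of_isIndepSet {S : Finset (V₁ ⊕ V₁ × V₂)}
    (hS : (corona (⊤ : SimpleGraph V₁) (⊤ : SimpleGraph V₂)).IsIndepSet ↑S) :
    ∑ x ∈ S, (corona (⊤ : SimpleGraph V₁) (⊤ : SimpleGraph V₂)).degree x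
      ≤ Fintype.card V₂ * Fintype.card V₁ + (Fintype.card V₁ - 1) := by
  rw [sum_corona_top_degree]
  gcongr
  · exact card_le_of_isIndepSet_corona_top hS
  · exact mul_le_of_le_one_right (Nat.zero_le _)
      (card_filter_isLeft_le_one_of_isIndepSet_corona_top hS)

lemma sum_degree_coronaTransversal (u₀ : V₁) (a₀ : V₂) :
    ∑ x ∈ coronaTransversal u₀ a₀, (corona (⊤ : SimpleGraph V₁) (⊤ : SimpleGraph V₂)).degree x
      = Fintype.card V₂ * Fintype.card V₁ + (Fintype.card V₁ - 1) := by
  have hinj : Function.Injective fun u : V₁ =>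
      (if u = u₀ then .inl u else .inr (u, a₀) : V₁ ⊕ V₁ × V₂) :=
    Function.LeftInverse.injective (g := coronaBlock) fun u => by
      by_cases hu : u = u₀ <;> simp [coronaBlock, hu]
  have hdeg : ∀ u, (corona (⊤ : SimpleGraph V₁) (⊤ : SimpleGraph V₂)).degree
      (if u = u₀ then .inl u else .inr (u, a₀))
        = Fintype.card V₂ + if u = u₀ then Fintype.card V₁ - 1 else 0 := fun u => by
    by_cases hu : u = u₀ <;> simp [corona_top_degree, hu]
  rw [coronaTransversal, sum_image hinj.injOn, sum_congr rfl fun u _ => hdeg u, sum_add_distrib]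
  simp [mul_comm]

lemma two_mul_card_edgeFinset_corona_top :
    2 * #(corona (⊤ : SimpleGraph V₁) (⊤ : SimpleGraph V₂)).edgeFinset
      = Fintype.card V₁ * (Fintype.card V₂ + (Fintype.card V₁ - 1))
        + Fintype.card V₁ * Fintype.card V₂ * Fintype.card V₂ := by
  rw [← sum_degrees_eq_twice_card_edges, Fintype.sum_sum_type]
  simp [corona_top_degree, mul_assoc]

end Corona

/-- Sparing number of the corona `K_m ⊙ K_n` of two complete graphs. -/
theorem sparing_corona_complete_complete (m n : ℕ) (hm : 1 ≤ m) (hn : 1 ≤ n) :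
    2 * sparingNumber (corona (⊤ : SimpleGraph (Fin m)) (⊤ : SimpleGraph (Fin n)))
      = (m - 1) * (m - 2) + m * n * (n - 1) := by
  have hsparing := sparingNumber_add_sum_degree_eq
    (isIndepSet_coronaTransversal ⊤ ⊤ (⟨0, hm⟩ : Fin m) (⟨0, hn⟩ : Fin n))
    fun _ hS => (sum_corona_top_degree_le_of_isIndepSet hS).trans_eq
      (sum_degree_coronaTransversal _ _).symm
  have hedges := two_mul_card_edgeFinset_corona_top (V₁ := Fin m) (V₂ := Fin n)
  simp only [sum_degree_coronaTransversal, Fintype.card_fin] at hsparing hedges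
  have hm' : (m - 1) * (m - 2) + 2 * (m - 1) = m * (m - 1) := by
    rcases m with _ | _ | m <;> grind
  have hn' : m * n * (n - 1) + m * n = m * n * n := by
    rcases n with _ | n <;> grind
  linarith
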